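/- arXiv:1409.4192 — 6 statements merged into one kernel-verified Lean document; each statement's English description precedes it below -/
import Mathlib

section
/- If G is a graph on n vertices containing no copy of C_5 (the cycle on 5 vertices), then the number of triangles in G is at most 2m/3, where m is the number of edges of G. -/
/-!
For every vertex `v`, a path on four vertices inside `N(v)` closes up through `v` into a `C₅`,
so `G[N(v)]` has no path on four vertices. Such a graph has degree sum at most twice its order
(the Erdős–Gallai bound for `P₄`): delete a vertex of degree at most one and induct; if there is
none, all degrees are exactly two, since a vertex `u` with neighbours `a, b, c` and a further
neighbour `w ≠ u` of `a` would make `w a u b` or `w a u c` a path. A triangle through `v` is an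
edge of `G[N(v)]`, so `2 · #{triangles ∋ v} ≤ 2 · deg v`, and summing over `v` gives
`3 · #triangles ≤ 2m`.
-/

open Finset

namespace SimpleGraph

variable {V : Type*} (G : SimpleGraph V)

/-- `G[s]` has no path on four vertices: a walk `a b c d` in `s` with `a ≠ c` and `b ≠ d` can only
close up into a triangle. -/
def PathFourFreeOn (s : Set V) : Prop :=
  ∀ ⦃a b c d⦄, a ∈ s → b ∈ s → c ∈ s → d ∈ s →
    G.Adj a b → G.Adj b c → G.Adj c d → a ≠ c → b ≠ d → a = d

variable {G}

lemma PathFourFreeOn.mono {s t : Set V} (h : G.PathFourFreeOn t) (hst : s ⊆ t) :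
    G.PathFourFreeOn s :=
  fun _ _ _ _ ha hb hc hd ↦ h (hst ha) (hst hb) (hst hc) (hst hd)

lemma pathFourFreeOn_neighborSet (h : (cycleGraph 5).Free G) (v : V) :
    G.PathFourFreeOn (G.neighborSet v) := by
  intro a b c d hva hvb hvc hvd hab hbc hcd hac hbd
  rw [mem_neighborSet] at hva hvb hvc hvd
  by_contra had
  refine h <| (cycleGraph_isContained_iff (by norm_num)).2
    ⟨v, .cons hva (.cons hab (.cons hbc (.cons hcd (.cons hvd.symm .nil)))), ?_, rfl⟩
  rw [Walk.cons_isCycle_iff]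
  simp [Walk.isPath_def, hvb.ne, hva.ne', hvb.ne', hvc.ne', hvd.ne', hab.ne, hbc.ne, hcd.ne,
    hac, hbd, had]

variable [DecidableRel G.Adj] {s : Finset V} {u : V}

lemma PathFourFreeOn.card_filter_adj_le_two (h : G.PathFourFreeOn s)
    (hmin : ∀ x ∈ s, 2 ≤ #{y ∈ s | G.Adj x y}) (hu : u ∈ s) : #{y ∈ s | G.Adj u y} ≤ 2 := by
  by_contra! hu3
  obtain ⟨a, ha, b, hb, c, hc, hab, hac, hbc⟩ := two_lt_card.1 hu3
  simp only [mem_filter] at ha hb hc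
  obtain ⟨w, hw, hwu⟩ := exists_mem_ne (hmin a ha.1) u
  rw [mem_filter] at hw
  have hwb := h hw.1 ha.1 hu hb.1 hw.2.symm ha.2.symm hb.2 hwu hab
  have hwc := h hw.1 ha.1 hu hc.1 hw.2.symm ha.2.symm hc.2 hwu hac
  exact hbc (hwb.symm.trans hwc)

variable [DecidableEq V]

lemma sum_card_filter_adj_erase (hu : u ∈ s) :
    ∑ x ∈ s, #{y ∈ s | G.Adj x y} =
      ∑ x ∈ s.erase u, #{y ∈ s.erase u | G.Adj x y} + 2 * #{y ∈ s | G.Adj u y} := by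
  have hsplit : ∀ x ∈ s.erase u,
      #{y ∈ s | G.Adj x y} = #{y ∈ s.erase u | G.Adj x y} + if G.Adj x u then 1 else 0 := by
    intro x _
    rw [← insert_erase hu, filter_insert, insert_erase hu]
    split_ifs
    · exact card_insert_of_notMem (by simp)
    · rfl
  have hback : ∑ x ∈ s.erase u, (if G.Adj x u then 1 else 0) = #{y ∈ s | G.Adj u y} := by
    rw [← card_filter, filter_erase, erase_eq_of_notMem (by simp)]
    simp_rw [G.adj_comm]
  rw [← add_sum_erase s _ hu, sum_congr rfl hsplit, sum_add_distrib, hback]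
  ring

theorem PathFourFreeOn.sum_card_filter_adj_le (h : G.PathFourFreeOn s) :
    ∑ x ∈ s, #{y ∈ s | G.Adj x y} ≤ 2 * #s := by
  induction s using strongInduction with | H s ih => ?_
  by_cases hlow : ∃ u ∈ s, #{y ∈ s | G.Adj u y} ≤ 1
  · obtain ⟨u, hu, hdeg⟩ := hlow
    have := ih _ (erase_ssubset hu) (h.mono (by simp))
    have := card_erase_add_one hu
    rw [sum_card_filter_adj_erase hu]
    omega
  · push Not at hlow
    calc ∑ x ∈ s, #{y ∈ s | G.Adj x y} ≤ #s • 2 :=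
          sum_le_card_nsmul _ _ _ fun x hx ↦ h.card_filter_adj_le_two (fun y hy ↦ hlow y hy) hx
      _ = 2 * #s := by rw [smul_eq_mul, mul_comm]

variable [Fintype V]

lemma sum_card_filter_mem_cliqueFinset (n : ℕ) :
    ∑ v, #{t ∈ G.cliqueFinset n | v ∈ t} = n * #(G.cliqueFinset n) := by
  have := sum_card_bipartiteAbove_eq_sum_card_bipartiteBelow (s := G.cliqueFinset n)
    (t := univ) (r := fun t v ↦ v ∈ t)
  simp only [bipartiteAbove, bipartiteBelow] at this
  rw [← this, mul_comm, sum_const_nat fun t ht ↦ by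
    rw [filter_univ_mem, (mem_cliqueFinset_iff.1 ht).card_eq]]

lemma two_mul_card_filter_mem_cliqueFinset_three_le (v : V) :
    2 * #{t ∈ G.cliqueFinset 3 | v ∈ t} ≤
      ∑ x ∈ G.neighborFinset v, #{y ∈ G.neighborFinset v | G.Adj x y} := by
  set N := G.neighborFinset v
  set T := {t ∈ G.cliqueFinset 3 | v ∈ t}
  have hT : ∀ t ∈ T, #(N.bipartiteAbove (fun t x ↦ x ∈ t) t) = 2 := by
    intro t ht
    rw [mem_filter, mem_cliqueFinset_iff] at ht
    have : N.bipartiteAbove (fun t x ↦ x ∈ t) t = t.erase v := by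
      ext x
      simp only [bipartiteAbove, N, mem_filter, mem_neighborFinset, mem_erase]
      exact ⟨fun ⟨hvx, hx⟩ ↦ ⟨hvx.ne', hx⟩, fun ⟨hxv, hx⟩ ↦ ⟨ht.1.1 ht.2 hx hxv.symm, hx⟩⟩
    rw [this, card_erase_of_mem ht.2, ht.1.card_eq]
  have hN : ∀ x ∈ N, #(T.bipartiteBelow (fun t x ↦ x ∈ t) x) ≤ #{y ∈ N | G.Adj x y} := by
    intro x hx
    refine card_le_card_of_surjOn (fun y ↦ {v, x, y}) fun t ht ↦ ?_
    rw [bipartiteBelow, coe_filter] at ht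
    obtain ⟨htT, hxt⟩ := ht
    obtain ⟨htc, hvt⟩ := mem_filter.1 htT
    rw [mem_cliqueFinset_iff] at htc
    have hxt' : x ∈ t.erase v := mem_erase.2 ⟨(G.mem_neighborFinset v x |>.1 hx).ne', hxt⟩
    obtain ⟨y, hy⟩ := card_eq_one.1 <| show #((t.erase v).erase x) = 1 by
      rw [card_erase_of_mem hxt', card_erase_of_mem hvt, htc.card_eq]
    have ht : t = {v, x, y} := by rw [← insert_erase hvt, ← insert_erase hxt', hy]
    rw [ht, is3Clique_triple_iff] at htc
    exact ⟨y, by simp [N, htc.2.1, htc.2.2], ht.symm⟩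
  calc 2 * #T = ∑ t ∈ T, #(N.bipartiteAbove (fun t x ↦ x ∈ t) t) := by
        rw [sum_const_nat hT, mul_comm]
    _ = ∑ x ∈ N, #(T.bipartiteBelow (fun t x ↦ x ∈ t) x) :=
        sum_card_bipartiteAbove_eq_sum_card_bipartiteBelow _
    _ ≤ _ := sum_le_sum hN

theorem three_mul_card_cliqueFinset_three_le_of_cycleGraph_five_free
    (h : (cycleGraph 5).Free G) : 3 * #(G.cliqueFinset 3) ≤ 2 * #G.edgeFinset := by
  have hv : ∀ v, 2 * #{t ∈ G.cliqueFinset 3 | v ∈ t} ≤ 2 * G.degree v := fun v ↦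
    (two_mul_card_filter_mem_cliqueFinset_three_le v).trans <| by
      rw [← card_neighborFinset_eq_degree]
      exact (pathFourFreeOn_neighborSet h v).mono (by simp) |>.sum_card_filter_adj_le
  have := sum_le_sum fun v (_ : v ∈ univ) ↦ hv v
  rw [← mul_sum, ← mul_sum, sum_card_filter_mem_cliqueFinset,
    sum_degrees_eq_twice_card_edges] at this
  omega

end SimpleGraph

theorem stmt_2 (n : ℕ) (G : SimpleGraph (Fin n))
    (hfree : ¬ ∃ f : SimpleGraph.cycleGraph 5 →g G, Function.Injective f) :
    3 * (G.cliqueSet 3).ncard ≤ 2 * G.edgeSet.ncard := by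
  classical
  have hC5 : (SimpleGraph.cycleGraph 5).Free G := fun ⟨c⟩ ↦ hfree ⟨c.toHom, c.injective⟩
  rw [← SimpleGraph.coe_cliqueFinset, ← SimpleGraph.coe_edgeFinset, Set.ncard_coe_finset,
    Set.ncard_coe_finset]
  exact G.three_mul_card_cliqueFinset_three_le_of_cycleGraph_five_free hC5
end

section
/- For any fixed m ≤ t, every K_{1,t}-free graph on n vertices contains at most (n/m)·C(t-1, m-1) copies of K_m. Moreover, if t divides n, the disjoint union of n/t copies of K_t achieves this bound, so ex(n, K_m, K_{1,t}) = (n/m)·C(t-1, m-1) when t | n. -/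
/-!
Every `m`-clique through a vertex `v` is `v` together with an `(m-1)`-clique of the
neighbourhood of `v`, so `v` lies in at most `C(deg v, m-1) ≤ C(t-1, m-1)` of them. Counting
pairs (vertex, `m`-clique containing it) gives `m · #cliques ≤ n · C(t-1, m-1)`. In a disjoint
union of copies of `K_t` every neighbourhood is a clique of size `t - 1`, so both inequalities
are equalities.
-/

/-- A graph is `K_{1,t}`-free iff it contains no subgraph isomorphic to the
star with `t` leaves. -/
def K1tFree {V : Type*} (G : SimpleGraph V) (t : ℕ) : Prop :=
  ¬ ∃ f : completeBipartiteGraph (Fin 1) (Fin t) →g G, Function.Injective f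

open Finset

namespace SimpleGraph

variable {V : Type*}

section Degree

variable [Fintype V] (G : SimpleGraph V) [DecidableRel G.Adj]

theorem k1tFree_iff_forall_degree_lt {t : ℕ} : K1tFree G t ↔ ∀ v, G.degree v < t := by
  refine ⟨fun hG v => ?_, fun hdeg ⟨f, hf⟩ => ?_⟩
  · by_contra! hv
    rw [← card_neighborSet_eq_degree, ← Fintype.card_fin t] at hv
    obtain ⟨leaf⟩ := Function.Embedding.nonempty_of_card_le hv
    refine hG ⟨⟨Sum.elim (fun _ => v) (fun i => leaf i), ?_⟩, ?_⟩
    · rintro (_ | i) (_ | j) h <;>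
        simp only [completeBipartiteGraph_adj, Sum.isLeft_inl, Sum.isLeft_inr, Sum.isRight_inl,
          Sum.isRight_inr, Bool.false_eq_true, and_self, and_true, and_false, or_self, or_true,
          or_false, Sum.elim_inl, Sum.elim_inr] at h ⊢
      exacts [(leaf j).2, ((leaf i).2).symm]
    · rintro (a | i) (b | j) h <;>
        simp only [RelHom.coeFn_mk, Sum.elim_inl, Sum.elim_inr, Sum.inl.injEq, Sum.inr.injEq,
          reduceCtorEq] at h ⊢
      exacts [Subsingleton.elim a b, G.ne_of_adj (leaf j).2 h, G.ne_of_adj (leaf i).2 h.symm,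
        leaf.injective (Subtype.ext h)]
  · have hleaves : t ≤ G.degree (f (.inl 0)) := by
      simpa using card_le_card_of_injOn (s := univ) (t := G.neighborFinset _)
        (fun i : Fin t => f (.inr i)) (fun i _ => by simpa using f.map_adj (by simp))
        (fun i _ j _ h => Sum.inr_injective (hf h))
    exact (hdeg _).not_ge hleaves

end Degree

section Cliques

variable [Fintype V] [DecidableEq V] (G : SimpleGraph V) [DecidableRel G.Adj] {m : ℕ}

theorem card_cliqueFinset_filter_mem (hm : 0 < m) (v : V) :
    #{s ∈ G.cliqueFinset m | v ∈ s} =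
      #{s ∈ G.cliqueFinset (m - 1) | s ⊆ G.neighborFinset v} := by
  refine card_nbij' (fun s => s.erase v) (insert v) (fun s hs => ?_) (fun s hs => ?_)
    (fun s hs => ?_) (fun s hs => ?_)
  all_goals simp only [coe_filter, Set.mem_ofPred_eq, mem_cliqueFinset_iff] at hs ⊢
  · refine ⟨hs.1.erase_of_mem hs.2, fun w hw => ?_⟩
    rw [mem_neighborFinset]
    exact hs.1.isClique hs.2 (mem_of_mem_erase hw) (ne_of_mem_erase hw).symm
  · refine ⟨Nat.sub_add_cancel hm ▸ hs.1.insert fun w hw => ?_, mem_insert_self v s⟩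
    simpa using hs.2 hw
  · exact insert_erase hs.2
  · exact erase_insert fun hv => by simpa using hs.2 hv

theorem card_cliqueFinset_filter_mem_le (hm : 0 < m) (v : V) :
    #{s ∈ G.cliqueFinset m | v ∈ s} ≤ (G.degree v).choose (m - 1) := by
  rw [card_cliqueFinset_filter_mem G hm, ← card_neighborFinset_eq_degree, ← card_powersetCard]
  refine card_le_card fun s hs => ?_
  simp only [mem_filter, mem_cliqueFinset_iff] at hs
  exact mem_powersetCard.2 ⟨hs.2, hs.1.card_eq⟩

theorem card_cliqueFinset_filter_mem_of_isClique (hm : 0 < m) {v : V}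
    (hN : G.IsClique (G.neighborSet v)) :
    #{s ∈ G.cliqueFinset m | v ∈ s} = (G.degree v).choose (m - 1) := by
  rw [card_cliqueFinset_filter_mem G hm, ← card_neighborFinset_eq_degree, ← card_powersetCard]
  congr 1
  ext s
  simp only [mem_filter, mem_cliqueFinset_iff, mem_powersetCard, isNClique_iff]
  refine ⟨fun h => ⟨h.2, h.1.2⟩, fun h => ⟨⟨hN.subset ?_, h.2⟩, h.1⟩⟩
  rw [← coe_neighborFinset]
  exact_mod_cast h.1

theorem sum_card_cliqueFinset : ∑ s ∈ G.cliqueFinset m, #s = m * #(G.cliqueFinset m) := by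
  rw [sum_congr rfl fun s hs => (mem_cliqueFinset_iff.1 hs).card_eq, sum_const, smul_eq_mul,
    mul_comm]

theorem mul_card_cliqueFinset_le_of_degree_le (hm : 0 < m) {d : ℕ}
    (hd : ∀ v, G.degree v ≤ d) :
    m * #(G.cliqueFinset m) ≤ Fintype.card V * d.choose (m - 1) := by
  rw [← sum_card_cliqueFinset]
  exact sum_card_le fun v =>
    (G.card_cliqueFinset_filter_mem_le hm v).trans (Nat.choose_le_choose _ (hd v))

theorem mul_card_cliqueFinset_of_degree_eq (hm : 0 < m) {d : ℕ} (hd : ∀ v, G.degree v = d)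
    (hN : ∀ v, G.IsClique (G.neighborSet v)) :
    m * #(G.cliqueFinset m) = Fintype.card V * d.choose (m - 1) := by
  rw [← sum_card_cliqueFinset]
  exact sum_card fun v => hd v ▸ G.card_cliqueFinset_filter_mem_of_isClique hm (hN v)

end Cliques

section FiberGraph

variable {ι : Type*} (f : V → ι)

/-- The disjoint union of the complete graphs on the fibres of `f`. -/
def fiberGraph : SimpleGraph V where
  Adj a b := a ≠ b ∧ f a = f b
  symm := ⟨fun _ _ h => ⟨h.1.symm, h.2.symm⟩⟩
  loopless := ⟨fun _ h => h.1 rfl⟩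

@[simp]
theorem fiberGraph_adj {a b : V} : (fiberGraph f).Adj a b ↔ a ≠ b ∧ f a = f b := Iff.rfl

theorem isClique_neighborSet_fiberGraph (v : V) :
    (fiberGraph f).IsClique ((fiberGraph f).neighborSet v) :=
  fun _ ha _ hb hab => ⟨hab, ha.2.symm.trans hb.2⟩

theorem degree_fiberGraph [Fintype V] [DecidableEq V] [DecidableEq ι]
    [DecidableRel (fiberGraph f).Adj] (v : V) :
    (fiberGraph f).degree v = #{a | f a = f v} - 1 := by
  rw [← card_neighborFinset_eq_degree,
    ← card_erase_of_mem (show v ∈ ({a | f a = f v} : Finset V) by simp)]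
  congr 1
  ext a
  simp [eq_comm]

end FiberGraph

end SimpleGraph

theorem card_filter_snd_equiv_eq {V α ι : Type*} [Fintype V] [Fintype α] [DecidableEq ι]
    (e : V ≃ α × ι) (k : ι) : #{a | (e a).2 = k} = Fintype.card α := by
  rw [card_equiv e (t := univ ×ˢ {k}) fun a => by
      simp only [mem_filter, mem_univ, true_and, mem_product, mem_singleton],
    card_product, card_singleton, mul_one, card_univ]

theorem stmt_7 (n m t : ℕ) (hm : 1 ≤ m) (hmt : m ≤ t) :
    (∀ G : SimpleGraph (Fin n), K1tFree G t →
      m * (G.cliqueSet m).ncard ≤ n * (t - 1).choose (m - 1)) ∧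
    (t ∣ n → ∃ G : SimpleGraph (Fin n), K1tFree G t ∧
      m * (G.cliqueSet m).ncard = n * (t - 1).choose (m - 1)) := by
  classical
  simp only [← SimpleGraph.coe_cliqueFinset, Set.ncard_coe_finset]
  refine ⟨fun G hG => ?_, fun ⟨q, hq⟩ => ?_⟩
  · have hdeg v : G.degree v ≤ t - 1 :=
      Nat.le_sub_one_of_lt ((G.k1tFree_iff_forall_degree_lt).1 hG v)
    simpa using G.mul_card_cliqueFinset_le_of_degree_le hm hdeg
  · subst hq
    let e : Fin (t * q) ≃ Fin t × Fin q := finProdFinEquiv.symm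
    let G := SimpleGraph.fiberGraph fun a => (e a).2
    have hdeg v : G.degree v = t - 1 := by
      rw [SimpleGraph.degree_fiberGraph, card_filter_snd_equiv_eq, Fintype.card_fin]
    refine ⟨G, G.k1tFree_iff_forall_degree_lt.2 fun v => by rw [hdeg]; omega, ?_⟩
    simpa using G.mul_card_cliqueFinset_of_degree_eq hm hdeg
      (SimpleGraph.isClique_neighborSet_fiberGraph _)
end

section
/- Let s ≥ 2 and t ≥ s. Every K_{s,t}-free graph G on n vertices satisfies ∑_v C(deg(v), s) ≤ (t-1)·C(n,s); that is, the number of copies of the star K_{1,s} in G is at most (t-1)·C(n,s). -/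
open Finset

theorem stmt_8 {n s t : ℕ} (hs : 2 ≤ s) (hst : s ≤ t)
    (G : SimpleGraph (Fin n)) [DecidableRel G.Adj]
    (hfree : ¬ ∃ f : completeBipartiteGraph (Fin s) (Fin t) →g G,
      Function.Injective f) :
    ∑ v : Fin n, (G.degree v).choose s ≤ (t - 1) * n.choose s := by
  classical
  have key : ∀ S ∈ (univ : Finset (Fin n)).powersetCard s,
      (univ.filter fun v => S ⊆ G.neighborFinset v).card ≤ t - 1 := by
    intro S hS
    rw [mem_powersetCard_univ] at hS
    by_contra h
    push_neg at h
    have ht : t ≤ (univ.filter fun v => S ⊆ G.neighborFinset v).card := by omega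
    obtain ⟨T, hTsub, hT⟩ := exists_subset_card_eq ht
    have eS := S.equivFinOfCardEq hS
    have eT := T.equivFinOfCardEq hT
    set f : Fin s ⊕ Fin t → Fin n :=
      Sum.elim (fun i => ((eS.symm i : S) : Fin n)) (fun j => ((eT.symm j : T) : Fin n)) with hf
    have hfS : ∀ i, f (Sum.inl i) ∈ S := fun i => (eS.symm i).2
    have hfT : ∀ j, S ⊆ G.neighborFinset (f (Sum.inr j)) := fun j => by
      have := hTsub (eT.symm j).2
      exact (mem_filter.mp this).2
    refine hfree ⟨⟨f, ?_⟩, ?_⟩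
    · rintro (i | i) (j | j) hadj
      · simp [completeBipartiteGraph] at hadj
      · exact ((G.mem_neighborFinset _ _).mp (hfT j (hfS i))).symm
      · exact (G.mem_neighborFinset _ _).mp (hfT i (hfS j))
      · simp [completeBipartiteGraph] at hadj
    · rintro (i | i) (j | j) h
      · exact congrArg Sum.inl (eS.symm.injective (Subtype.coe_injective h))
      · exfalso
        have h' : f (Sum.inl i) = f (Sum.inr j) := h
        have hm : f (Sum.inl i) ∈ G.neighborFinset (f (Sum.inr j)) := hfT j (hfS i)
        rw [h'] at hm
        simp at hm
      · exfalso
        have h' : f (Sum.inr i) = f (Sum.inl j) := h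
        have hm : f (Sum.inl j) ∈ G.neighborFinset (f (Sum.inr i)) := hfT i (hfS j)
        rw [← h'] at hm
        simp at hm
      · exact congrArg Sum.inr (eT.symm.injective (Subtype.coe_injective h))
  calc ∑ v : Fin n, (G.degree v).choose s
      = ∑ v : Fin n, ((G.neighborFinset v).powersetCard s).card := by
        simp [card_powersetCard, SimpleGraph.card_neighborFinset_eq_degree]
    _ = ∑ v : Fin n, (((univ : Finset (Fin n)).powersetCard s).filter
          fun S => S ⊆ G.neighborFinset v).card := by
        refine sum_congr rfl fun v _ => ?_
        congr 1
        ext S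
        simp only [mem_powersetCard, mem_filter, mem_powersetCard_univ]
        exact ⟨fun h => ⟨⟨subset_univ S, h.2⟩, h.1⟩, fun h => ⟨h.2, h.1.2⟩⟩
    _ = ∑ S ∈ (univ : Finset (Fin n)).powersetCard s,
          (univ.filter fun v => S ⊆ G.neighborFinset v).card := by
        simp only [card_filter]
        exact sum_comm
    _ ≤ ∑ _S ∈ (univ : Finset (Fin n)).powersetCard s, (t - 1) := sum_le_sum key
    _ = (t - 1) * n.choose s := by simp [card_powersetCard, mul_comm]
end

section
/- Let m ≥ 4 and t > m-2 > 1. Let H be an m-uniform hypergraph with girth at least 5 (no two hyperedges share more than one vertex, and no Berge cycle of length 2, 3 or 4), and let G be the graph obtained by replacing each hyperedge of H with a clique K_m on its vertices. Then G contains no copy of K_{2,t}. -/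
/-!
Call a hypergraph linear if two distinct hyperedges share at most one vertex. In a linear
hypergraph without Berge 3-cycles, every triangle of the clique graph `G` lies inside a single
hyperedge; excluding Berge 4-cycles as well, so does every 4-cycle of `G`. In a copy of `K_{2,t}`
with parts `{a, b}` and `{x i}`, each `x i` lies on a 4-cycle `a, x i, b, x j`, so some hyperedge
contains `a`, `b` and `x i`; by linearity it is the same hyperedge for every `i`. That hyperedge
then has at least `t + 2 > m` vertices.
-/

namespace Hypergraph

open Finset

variable {V : Type*} [DecidableEq V]

def IsLinear (E : Finset (Finset V)) : Prop :=
  ∀ e₁ ∈ E, ∀ e₂ ∈ E, e₁ ≠ e₂ → (e₁ ∩ e₂).card ≤ 1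

def HasBergeThreeCycle (E : Finset (Finset V)) : Prop :=
  ∃ e₁ ∈ E, ∃ e₂ ∈ E, ∃ e₃ ∈ E, e₁ ≠ e₂ ∧ e₂ ≠ e₃ ∧ e₃ ≠ e₁ ∧
    ∃ v₁ v₂ v₃ : V, v₁ ≠ v₂ ∧ v₂ ≠ v₃ ∧ v₃ ≠ v₁ ∧
      v₁ ∈ e₁ ∩ e₂ ∧ v₂ ∈ e₂ ∩ e₃ ∧ v₃ ∈ e₃ ∩ e₁

def HasBergeFourCycle (E : Finset (Finset V)) : Prop :=
  ∃ e₁ ∈ E, ∃ e₂ ∈ E, ∃ e₃ ∈ E, ∃ e₄ ∈ E,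
    e₁ ≠ e₂ ∧ e₁ ≠ e₃ ∧ e₁ ≠ e₄ ∧ e₂ ≠ e₃ ∧ e₂ ≠ e₄ ∧ e₃ ≠ e₄ ∧
    ∃ v₁ v₂ v₃ v₄ : V, v₁ ≠ v₂ ∧ v₁ ≠ v₃ ∧ v₁ ≠ v₄ ∧ v₂ ≠ v₃ ∧ v₂ ≠ v₄ ∧ v₃ ≠ v₄ ∧
      v₁ ∈ e₁ ∩ e₂ ∧ v₂ ∈ e₂ ∩ e₃ ∧ v₃ ∈ e₃ ∩ e₄ ∧ v₄ ∈ e₄ ∩ e₁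

variable {E : Finset (Finset V)} {e₁ e₂ e₃ e₄ : Finset V} {a b c x y : V}

theorem IsLinear.eq_of_mem_of_mem (hE : IsLinear E) (he₁ : e₁ ∈ E) (he₂ : e₂ ∈ E)
    (hab : a ≠ b) (ha₁ : a ∈ e₁) (hb₁ : b ∈ e₁) (ha₂ : a ∈ e₂) (hb₂ : b ∈ e₂) : e₁ = e₂ := by
  by_contra hne
  have : 1 < (e₁ ∩ e₂).card :=
    one_lt_card.2 ⟨a, mem_inter.2 ⟨ha₁, ha₂⟩, b, mem_inter.2 ⟨hb₁, hb₂⟩, hab⟩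
  exact (hE e₁ he₁ e₂ he₂ hne).not_gt this

theorem IsLinear.mem_of_triangle (hE : IsLinear E) (h3 : ¬ HasBergeThreeCycle E)
    (hab : a ≠ b) (hbc : b ≠ c) (hca : c ≠ a) (he₁ : e₁ ∈ E) (he₂ : e₂ ∈ E) (he₃ : e₃ ∈ E)
    (ha₁ : a ∈ e₁) (hb₁ : b ∈ e₁) (hb₂ : b ∈ e₂) (hc₂ : c ∈ e₂) (hc₃ : c ∈ e₃) (ha₃ : a ∈ e₃) :
    c ∈ e₁ := by
  obtain rfl | h₁₂ := eq_or_ne e₁ e₂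
  · exact hc₂
  obtain rfl | h₃₁ := eq_or_ne e₃ e₁
  · exact hc₃
  obtain rfl | h₂₃ := eq_or_ne e₂ e₃
  · exact absurd (hE.eq_of_mem_of_mem he₁ he₂ hab ha₁ hb₁ ha₃ hb₂) h₁₂
  exact (h3 ⟨e₁, he₁, e₂, he₂, e₃, he₃, h₁₂, h₂₃, h₃₁, b, c, a, hbc, hca, hab,
    mem_inter.2 ⟨hb₁, hb₂⟩, mem_inter.2 ⟨hc₂, hc₃⟩, mem_inter.2 ⟨ha₃, ha₁⟩⟩).elim

theorem IsLinear.exists_mem_of_fourCycle (hE : IsLinear E) (h3 : ¬ HasBergeThreeCycle E)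
    (h4 : ¬ HasBergeFourCycle E)
    (hax : a ≠ x) (hab : a ≠ b) (hay : a ≠ y) (hxb : x ≠ b) (hxy : x ≠ y) (hby : b ≠ y)
    (he₁ : e₁ ∈ E) (he₂ : e₂ ∈ E) (he₃ : e₃ ∈ E) (he₄ : e₄ ∈ E)
    (ha₁ : a ∈ e₁) (hx₁ : x ∈ e₁) (hx₂ : x ∈ e₂) (hb₂ : b ∈ e₂)
    (hb₃ : b ∈ e₃) (hy₃ : y ∈ e₃) (hy₄ : y ∈ e₄) (ha₄ : a ∈ e₄) :
    ∃ e ∈ E, a ∈ e ∧ x ∈ e ∧ b ∈ e ∧ y ∈ e := by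
  obtain rfl | h₁₂ := eq_or_ne e₁ e₂
  · exact ⟨e₁, he₁, ha₁, hx₁, hb₂,
      hE.mem_of_triangle h3 hab hby hay.symm he₁ he₃ he₄ ha₁ hb₂ hb₃ hy₃ hy₄ ha₄⟩
  obtain rfl | h₂₃ := eq_or_ne e₂ e₃
  · exact ⟨e₂, he₂, hE.mem_of_triangle h3 hxy hay.symm hax he₂ he₄ he₁ hx₂ hy₃ hy₄ ha₄ ha₁ hx₁,
      hx₂, hb₂, hy₃⟩
  obtain rfl | h₃₄ := eq_or_ne e₃ e₄
  · exact ⟨e₃, he₃, ha₄, hE.mem_of_triangle h3 hab.symm hax hxb he₃ he₁ he₂ hb₃ ha₄ ha₁ hx₁ hx₂ hb₂,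
      hb₃, hy₃⟩
  obtain rfl | h₄₁ := eq_or_ne e₄ e₁
  · exact ⟨e₄, he₄, ha₄, hx₁,
      hE.mem_of_triangle h3 hxy.symm hxb hby he₄ he₂ he₃ hy₄ hx₁ hx₂ hb₂ hb₃ hy₃, hy₄⟩
  obtain rfl | h₁₃ := eq_or_ne e₁ e₃
  · exact ⟨e₁, he₁, ha₁, hx₁, hb₃, hy₃⟩
  obtain rfl | h₂₄ := eq_or_ne e₂ e₄
  · exact ⟨e₂, he₂, ha₄, hx₂, hb₂, hy₄⟩
  exact (h4 ⟨e₁, he₁, e₂, he₂, e₃, he₃, e₄, he₄, h₁₂, h₁₃, h₄₁.symm, h₂₃, h₂₄, h₃₄,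
    x, b, y, a, hxb, hxy, hax.symm, hby, hab.symm, hay.symm,
    mem_inter.2 ⟨hx₁, hx₂⟩, mem_inter.2 ⟨hb₂, hb₃⟩,
    mem_inter.2 ⟨hy₃, hy₄⟩, mem_inter.2 ⟨ha₄, ha₁⟩⟩).elim

theorem IsLinear.exists_mem_of_completeBipartite {ι : Type*} [Nontrivial ι] (hE : IsLinear E)
    (h3 : ¬ HasBergeThreeCycle E) (h4 : ¬ HasBergeFourCycle E) {G : SimpleGraph V}
    (hG : ∀ u v, G.Adj u v → ∃ e ∈ E, u ∈ e ∧ v ∈ e)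
    (f : completeBipartiteGraph (Fin 2) ι →g G) (hf : Function.Injective f) :
    ∃ e ∈ E, ∀ v, f v ∈ e := by
  have hne : ∀ {v w}, v ≠ w → f v ≠ f w := hf.ne
  have hedge : ∀ k i, ∃ e ∈ E, f (.inl k) ∈ e ∧ f (.inr i) ∈ e :=
    fun k i => hG _ _ (f.map_adj (by simp))
  have habx : ∀ i, ∃ e ∈ E, f (.inl 0) ∈ e ∧ f (.inl 1) ∈ e ∧ f (.inr i) ∈ e := by
    intro i
    obtain ⟨j, hji⟩ := exists_ne i
    obtain ⟨e₁, he₁, ha₁, hx₁⟩ := hedge 0 i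
    obtain ⟨e₂, he₂, hb₂, hx₂⟩ := hedge 1 i
    obtain ⟨e₃, he₃, hb₃, hy₃⟩ := hedge 1 j
    obtain ⟨e₄, he₄, ha₄, hy₄⟩ := hedge 0 j
    obtain ⟨e, he, ha, hx, hb, -⟩ := hE.exists_mem_of_fourCycle h3 h4 (hne (by simp))
      (hne (by simp)) (hne (by simp)) (hne (by simp)) (hne (by simp [hji.symm]))
      (hne (by simp)) he₁ he₂ he₃ he₄ ha₁ hx₁ hx₂ hb₂ hb₃ hy₃ hy₄ ha₄
    exact ⟨e, he, ha, hb, hx⟩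
  obtain ⟨e, he, ha, hb, -⟩ := habx (Classical.arbitrary ι)
  refine ⟨e, he, ?_⟩
  rintro (k | i)
  · fin_cases k
    exacts [ha, hb]
  · obtain ⟨e', he', ha', hb', hx'⟩ := habx i
    rwa [← hE.eq_of_mem_of_mem he' he (hne (by simp)) ha' hb' ha hb]

end Hypergraph

theorem stmt_11 {V : Type*} [DecidableEq V] (m t : ℕ) (hm : 4 ≤ m) (ht : m - 2 < t)
    (E : Finset (Finset V)) (huniform : ∀ e ∈ E, e.card = m)
    -- any two distinct hyperedges share at most one vertex (no Berge 2-cycle)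
    (hint : ∀ e₁ ∈ E, ∀ e₂ ∈ E, e₁ ≠ e₂ → (e₁ ∩ e₂).card ≤ 1)
    -- no Berge cycle of length 3
    (h3 : ¬ ∃ e₁ ∈ E, ∃ e₂ ∈ E, ∃ e₃ ∈ E, e₁ ≠ e₂ ∧ e₂ ≠ e₃ ∧ e₃ ≠ e₁ ∧
      ∃ v₁ v₂ v₃ : V, v₁ ≠ v₂ ∧ v₂ ≠ v₃ ∧ v₃ ≠ v₁ ∧
        v₁ ∈ e₁ ∩ e₂ ∧ v₂ ∈ e₂ ∩ e₃ ∧ v₃ ∈ e₃ ∩ e₁)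
    -- no Berge cycle of length 4
    (h4 : ¬ ∃ e₁ ∈ E, ∃ e₂ ∈ E, ∃ e₃ ∈ E, ∃ e₄ ∈ E,
      e₁ ≠ e₂ ∧ e₁ ≠ e₃ ∧ e₁ ≠ e₄ ∧ e₂ ≠ e₃ ∧ e₂ ≠ e₄ ∧ e₃ ≠ e₄ ∧
      ∃ v₁ v₂ v₃ v₄ : V, v₁ ≠ v₂ ∧ v₁ ≠ v₃ ∧ v₁ ≠ v₄ ∧ v₂ ≠ v₃ ∧ v₂ ≠ v₄ ∧ v₃ ≠ v₄ ∧
        v₁ ∈ e₁ ∩ e₂ ∧ v₂ ∈ e₂ ∩ e₃ ∧ v₃ ∈ e₃ ∩ e₄ ∧ v₄ ∈ e₄ ∩ e₁)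
    (G : SimpleGraph V)
    (hG : ∀ u v : V, G.Adj u v ↔ u ≠ v ∧ ∃ e ∈ E, u ∈ e ∧ v ∈ e) :
    ¬ ∃ f : completeBipartiteGraph (Fin 2) (Fin t) →g G, Function.Injective f := by
  rintro ⟨f, hf⟩
  have : Nontrivial (Fin t) := Fin.nontrivial_iff_two_le.2 (by omega)
  obtain ⟨e, he, hfe⟩ := Hypergraph.IsLinear.exists_mem_of_completeBipartite (E := E) hint h3 h4
    (fun u v huv => ((hG u v).1 huv).2) f hf
  have hcard : 2 + t ≤ m := by
    calc 2 + t = (Finset.univ.map ⟨f, hf⟩).card := by simp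
      _ ≤ e.card := Finset.card_le_card fun _ hv => by
          obtain ⟨v, -, rfl⟩ := Finset.mem_map.1 hv
          exact hfe v
      _ = m := huniform e he
  omega
end

section
/- In any bipartite graph with no isolated vertices, the size (number of vertices) of a maximum independent set equals the size (number of edges) of a minimum edge cover. -/
/-!
Two distinct vertices of an independent set never lie on a common edge, so any independent set is
at most as large as any edge cover. Conversely, in a bipartite graph König's theorem provides an
independent set `I` and a matching `M` with `|V| ≤ |I| + |M|`, and (Gallai) adding to `M` one edge
at each unmatched vertex, which exists since no vertex is isolated, gives an edge cover of size at
most `|V| - |M| ≤ |I|`.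
-/

open Finset SimpleGraph

theorem csSup_eq_csInf_of_forall_le_of_le {α : Type*} [ConditionallyCompleteLattice α]
    {S T : Set α} {s t : α} (hle : ∀ x ∈ S, ∀ y ∈ T, x ≤ y) (hs : s ∈ S) (ht : t ∈ T)
    (hts : t ≤ s) : sSup S = sInf T :=
  le_antisymm (csSup_le ⟨s, hs⟩ fun x hx => le_csInf ⟨t, ht⟩ (hle x hx))
    ((csInf_le ⟨s, fun y hy => hle s hs y hy⟩ ht).trans
      (hts.trans (le_csSup ⟨t, fun x hx => hle x hx t ht⟩ hs)))

theorem Finset.exists_matching_of_card_le_card_biUnion_add {ι α : Type*} [Fintype ι]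
    [DecidableEq α] (t : ι → Finset α) (d : ℕ) (h : ∀ s : Finset ι, #s ≤ #(s.biUnion t) + d) :
    ∃ P : Finset (ι × α), (∀ p ∈ P, p.2 ∈ t p.1) ∧ Set.InjOn Prod.fst (P : Set (ι × α)) ∧
      Set.InjOn Prod.snd (P : Set (ι × α)) ∧ Fintype.card ι ≤ #P + d := by
  classical
  -- Hall's theorem after adding `d` new elements adjacent to every index.
  have hall (s : Finset ι) : #s ≤ #(s.biUnion fun i => (t i).disjSum (univ : Finset (Fin d))) := by
    rcases s.eq_empty_or_nonempty with rfl | hs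
    · simp
    have : s.biUnion (fun i => (t i).disjSum (univ : Finset (Fin d))) =
        (s.biUnion t).disjSum univ := by
      ext (a | j)
      · simp
      · simpa using hs.exists_mem
    rw [this, card_disjSum, card_univ, Fintype.card_fin]
    exact h s
  obtain ⟨f, hf, hft⟩ := (all_card_le_biUnion_card_iff_exists_injective _).1 hall
  set P := (univ ×ˢ univ.biUnion t).filter fun p => f p.1 = .inl p.2
  have hmemP {i : ι} {a : α} (hi : f i = .inl a) : (i, a) ∈ P := by
    have := hft i
    rw [hi, inl_mem_disjSum] at this
    simpa [P, hi] using ⟨i, this⟩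
  refine ⟨P, fun p hp => ?_, fun p hp q hq hpq => ?_, fun p hp q hq hpq => ?_, ?_⟩
  · have := hft p.1
    rwa [(mem_filter.1 hp).2, inl_mem_disjSum] at this
  · have := (mem_filter.1 hp).2.symm.trans (hpq ▸ (mem_filter.1 hq).2)
    exact Prod.ext hpq (Sum.inl_injective this)
  · exact Prod.ext (hf ((mem_filter.1 hp).2.trans (hpq ▸ (mem_filter.1 hq).2.symm))) hpq
  · have hleft : #(univ.filter fun i => (f i).isLeft) ≤ #P := by
      refine (card_le_card fun i hi => ?_).trans (card_image_le (f := Prod.fst))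
      obtain ⟨a, ha⟩ := Sum.isLeft_iff.1 (mem_filter.1 hi).2
      exact mem_image.2 ⟨_, hmemP ha, rfl⟩
    have hright : #(univ.filter fun i => ¬(f i).isLeft) ≤ d := by
      have hmaps : Set.MapsTo f ↑(univ.filter fun i => ¬(f i).isLeft)
          ↑((∅ : Finset α).disjSum (univ : Finset (Fin d))) := by
        intro i hi
        obtain ⟨j, hj⟩ := Sum.isRight_iff.1 (by simpa using hi)
        simp [hj]
      simpa using card_le_card_of_injOn f hmaps hf.injOn
    have := card_filter_add_card_filter_not (s := (univ : Finset ι))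
      fun i => (f i).isLeft
    rw [card_univ] at this
    omega

namespace SimpleGraph

variable {V : Type*} (G : SimpleGraph V)

def IsEdgeCover (c : Finset (Sym2 V)) : Prop :=
  (c : Set (Sym2 V)) ⊆ G.edgeSet ∧ ∀ v, ∃ e ∈ c, v ∈ e

def IsMatchingFinset [DecidableEq V] (M : Finset (Sym2 V)) : Prop :=
  (M : Set (Sym2 V)) ⊆ G.edgeSet ∧ (M : Set (Sym2 V)).PairwiseDisjoint Sym2.toFinset

variable {G}

theorem isIndepSet_iff_forall_not_adj {s : Set V} :
    G.IsIndepSet s ↔ ∀ v ∈ s, ∀ w ∈ s, ¬G.Adj v w :=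
  ⟨fun h _ hv _ hw hadj => h hv hw hadj.ne hadj, fun h _ hv _ hw _ => h _ hv _ hw⟩

theorem IsIndepSet.card_le_card_of_isEdgeCover {s : Finset V} {c : Finset (Sym2 V)}
    (hs : G.IsIndepSet (s : Set V)) (hc : G.IsEdgeCover c) : #s ≤ #c := by
  choose e hec hve using hc.2
  refine card_le_card_of_injOn e (fun v _ => hec v) fun v hv w hw hvw => ?_
  by_contra hne
  have : e v = s(v, w) := (Sym2.mem_and_mem_iff hne).1 ⟨hve v, hvw ▸ hve w⟩
  exact hs hv hw hne (G.mem_edgeSet.1 (this ▸ hc.1 (hec v)))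

theorem IsMatchingFinset.card_biUnion_toFinset [DecidableEq V] {M : Finset (Sym2 V)}
    (hM : G.IsMatchingFinset M) : #(M.biUnion Sym2.toFinset) = 2 * #M := by
  rw [card_biUnion hM.2, sum_const_nat fun e he =>
    Sym2.card_toFinset_of_not_isDiag e (G.not_isDiag_of_mem_edgeSet (hM.1 he)), mul_comm]

theorem exists_isEdgeCover_card_add_card_le [Fintype V] [DecidableEq V]
    (hnoiso : ∀ v, ∃ w, G.Adj v w) {M : Finset (Sym2 V)} (hM : G.IsMatchingFinset M) :
    ∃ c, G.IsEdgeCover c ∧ #c + #M ≤ Fintype.card V := by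
  choose partner hpartner using hnoiso
  set U := M.biUnion Sym2.toFinset
  refine ⟨M ∪ (univ \ U).image fun v => s(v, partner v), ⟨?_, fun v => ?_⟩, ?_⟩
  · intro e he
    rcases mem_union.1 he with he | he
    · exact hM.1 he
    · obtain ⟨v, -, rfl⟩ := mem_image.1 he
      exact hpartner v
  · by_cases hv : v ∈ U
    · obtain ⟨e, he, hve⟩ := mem_biUnion.1 hv
      exact ⟨e, mem_union_left _ he, Sym2.mem_toFinset.1 hve⟩
    · exact ⟨s(v, partner v), mem_union_right _ (mem_image_of_mem _ (by simpa using hv)),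
        Sym2.mem_mk_left _ _⟩
  · have hcard := card_union_le M ((univ \ U).image fun v => s(v, partner v))
    have himage := card_image_le (s := univ \ U) (f := fun v => s(v, partner v))
    have hU : #U = 2 * #M := hM.card_biUnion_toFinset
    rw [card_sdiff_of_subset (subset_univ U), card_univ] at himage
    have := card_le_univ U
    omega

section Bipartite

variable {α β : Type*} (G : SimpleGraph (α ⊕ β))

open Classical in
noncomputable def rightNeighborFinset [Fintype β] (a : α) : Finset β :=
  {b | G.Adj (.inl a) (.inr b)}

variable {G}

theorem isIndepSet_disjSum_compl_biUnion [Fintype β] [DecidableEq β]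
    (hbip₁ : ∀ a b : α, ¬G.Adj (.inl a) (.inl b)) (hbip₂ : ∀ a b : β, ¬G.Adj (.inr a) (.inr b))
    (s : Finset α) :
    G.IsIndepSet ↑(s.disjSum (univ \ s.biUnion G.rightNeighborFinset)) := by
  rw [isIndepSet_iff_forall_not_adj]
  rintro (a | b) hv (a' | b') hw hadj
  · exact hbip₁ a a' hadj
  · simp only [mem_coe, inl_mem_disjSum, inr_mem_disjSum, mem_sdiff, mem_univ, mem_biUnion,
      true_and, not_exists, not_and] at hv hw
    exact hw a hv (by simpa [rightNeighborFinset] using hadj)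
  · simp only [mem_coe, inl_mem_disjSum, inr_mem_disjSum, mem_sdiff, mem_univ, mem_biUnion,
      true_and, not_exists, not_and] at hv hw
    exact hv a' hw (by simpa [rightNeighborFinset] using hadj.symm)
  · exact hbip₂ b b' hadj

theorem isMatchingFinset_image_of_injOn [DecidableEq α] [DecidableEq β] {P : Finset (α × β)}
    (hadj : ∀ p ∈ P, G.Adj (.inl p.1) (.inr p.2)) (hfst : Set.InjOn Prod.fst (P : Set (α × β)))
    (hsnd : Set.InjOn Prod.snd (P : Set (α × β))) :
    G.IsMatchingFinset (P.image fun p => s(.inl p.1, .inr p.2)) := by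
  refine ⟨fun e he => ?_, ?_⟩
  · obtain ⟨p, hp, rfl⟩ := mem_image.1 he
    exact hadj p hp
  · rw [coe_image]
    rintro _ ⟨p, hp, rfl⟩ _ ⟨q, hq, rfl⟩ hne
    have h1 : p.1 ≠ q.1 := fun h => hne (by rw [hfst hp hq h])
    have h2 : p.2 ≠ q.2 := fun h => hne (by rw [hsnd hp hq h])
    simp [Function.onFun, Sym2.toFinset_mk_eq, h1.symm, h2.symm]

theorem card_image_sym2_inl_inr [DecidableEq α] [DecidableEq β] (P : Finset (α × β)) :
    #(P.image fun p => s((.inl p.1 : α ⊕ β), .inr p.2)) = #P :=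
  card_image_of_injective _ fun p q h => by simpa [Prod.ext_iff] using h

/-- Take `S ⊆ α` of maximal deficiency `d = |S| - |N(S)|`: then `S ∪ (β \ N(S))` is independent of
size `|β| + d`, and by the defect form of Hall's theorem some matching misses at most `d` vertices
of `α`. -/
theorem exists_isIndepSet_isMatchingFinset_card_le [Fintype α] [Fintype β] [DecidableEq α]
    [DecidableEq β] (hbip₁ : ∀ a b : α, ¬G.Adj (.inl a) (.inl b))
    (hbip₂ : ∀ a b : β, ¬G.Adj (.inr a) (.inr b)) :
    ∃ (I : Finset (α ⊕ β)) (M : Finset (Sym2 (α ⊕ β))), G.IsIndepSet ↑I ∧ G.IsMatchingFinset M ∧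
      Fintype.card (α ⊕ β) ≤ #I + #M := by
  obtain ⟨S, -, hS⟩ := exists_max_image univ
    (fun s : Finset α => #s + #(univ \ s.biUnion G.rightNeighborFinset)) univ_nonempty
  have hcompl (s : Finset α) : #(univ \ s.biUnion G.rightNeighborFinset) =
      Fintype.card β - #(s.biUnion G.rightNeighborFinset) := by
    rw [card_sdiff_of_subset (subset_univ _), card_univ]
  have hS₀ : Fintype.card β ≤ #S + #(univ \ S.biUnion G.rightNeighborFinset) := by
    simpa using hS ∅ (mem_univ ∅)
  obtain ⟨d, hd⟩ := Nat.exists_eq_add_of_le hS₀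
  have hdef (s : Finset α) : #s ≤ #(s.biUnion G.rightNeighborFinset) + d := by
    have := hS s (mem_univ s)
    rw [hd, hcompl] at this
    have := card_le_univ (s.biUnion G.rightNeighborFinset)
    omega
  obtain ⟨P, hPadj, hfst, hsnd, hP⟩ :=
    exists_matching_of_card_le_card_biUnion_add G.rightNeighborFinset d hdef
  refine ⟨_, _, isIndepSet_disjSum_compl_biUnion hbip₁ hbip₂ S,
    isMatchingFinset_image_of_injOn (fun p hp => by simpa [rightNeighborFinset] using hPadj p hp)
      hfst hsnd, ?_⟩
  rw [card_disjSum, card_image_sym2_inl_inr, Fintype.card_sum, hd]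
  omega

end Bipartite

end SimpleGraph

theorem stmt_14 {α β : Type*} [Fintype α] [Fintype β] [DecidableEq α] [DecidableEq β]
    (G : SimpleGraph (α ⊕ β))
    (hbip₁ : ∀ a b : α, ¬ G.Adj (Sum.inl a) (Sum.inl b))
    (hbip₂ : ∀ a b : β, ¬ G.Adj (Sum.inr a) (Sum.inr b))
    (hnoiso : ∀ v : α ⊕ β, ∃ w, G.Adj v w) :
    sSup {k : ℕ | ∃ s : Finset (α ⊕ β),
        (∀ v ∈ s, ∀ w ∈ s, ¬ G.Adj v w) ∧ s.card = k} =
    sInf {k : ℕ | ∃ c : Finset (Sym2 (α ⊕ β)), ↑c ⊆ G.edgeSet ∧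
        (∀ v : α ⊕ β, ∃ e ∈ c, v ∈ e) ∧ c.card = k} := by
  obtain ⟨I, M, hI, hM, hIM⟩ := exists_isIndepSet_isMatchingFinset_card_le hbip₁ hbip₂
  obtain ⟨c, hc, hcM⟩ := exists_isEdgeCover_card_add_card_le hnoiso hM
  refine csSup_eq_csInf_of_forall_le_of_le ?_
    ⟨I, isIndepSet_iff_forall_not_adj.1 hI, rfl⟩ ⟨c, hc.1, hc.2, rfl⟩ (by omega)
  rintro _ ⟨s, hs, rfl⟩ _ ⟨c, hce, hcov, rfl⟩
  exact (isIndepSet_iff_forall_not_adj.2 hs).card_le_card_of_isEdgeCover ⟨hce, hcov⟩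
end

section
/- Let H be a graph containing two vertex-disjoint triangles. Then the complete 3-partite graph K_{1, ⌊(n-1)/2⌋, ⌈(n-1)/2⌉} on n vertices contains no copy of H, and contains exactly ⌊(n-1)²/4⌋ triangles; hence ex(n, K_3, H) ≥ ⌊(n-1)²/4⌋. -/
/-!
A triangle of a complete multipartite graph with three parts takes exactly one vertex from each
part. In `K_{1,a,b}` every triangle therefore passes through the apex, and the triangles are the
`a * b` choices of one vertex in each of the two large parts. An injective copy of a graph with two
vertex-disjoint triangles would send a vertex of each of them to the apex, contradicting
injectivity. Relabelling the vertices by `Fin n` gives the extremal lower bound, since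
`⌊m/2⌋ * ⌈m/2⌉ = ⌊m²/4⌋`.
-/

/-- The complete 3-partite graph `K_{1, ⌊(n-1)/2⌋, ⌈(n-1)/2⌉}` on `n` vertices. -/
def K1abGraph (n : ℕ) : SimpleGraph (Σ i : Fin 3, ![Fin 1, Fin ((n - 1) / 2), Fin (n - 1 - (n - 1) / 2)] i) :=
  SimpleGraph.completeMultipartiteGraph _

open Finset Function SimpleGraph

theorem Nat.div_two_mul_sub_div_two (m : ℕ) : m / 2 * (m - m / 2) = m ^ 2 / 4 := by
  obtain ⟨k, rfl | rfl⟩ := Nat.even_or_odd' m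
  · rw [show 2 * k / 2 = k by omega, show 2 * k - k = k by omega,
      show (2 * k) ^ 2 = 4 * (k * k) by ring, Nat.mul_div_cancel_left _ (by norm_num)]
  · rw [show (2 * k + 1) / 2 = k by omega, show 2 * k + 1 - k = k + 1 by omega,
      show (2 * k + 1) ^ 2 = 4 * (k * (k + 1)) + 1 by ring]
    omega

namespace SimpleGraph

variable {V W : Type*}

theorem isContained_iff_exists_injective_hom {G : SimpleGraph V} {H : SimpleGraph W} :
    H ⊑ G ↔ ∃ φ : H →g G, Injective φ :=
  ⟨fun ⟨f⟩ => ⟨f.toHom, f.injective⟩, fun ⟨φ, hφ⟩ => ⟨φ.toCopy hφ⟩⟩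

theorem ncard_cliqueSet_map_equiv (G : SimpleGraph V) (e : V ≃ W) (k : ℕ) :
    ((G.map e).cliqueSet k).ncard = (G.cliqueSet k).ncard := by
  rw [cliqueSet_map_of_equiv, Set.ncard_image_of_injective _ (Finset.map_injective _)]

theorem not_isContained_of_forall_mem_cliqueSet_three {G : SimpleGraph V} {H : SimpleGraph W}
    (v : V) (hv : ∀ s ∈ G.cliqueSet 3, v ∈ s)
    (hH : ∃ a b c d e f : W, ([a, b, c, d, e, f] : List W).Nodup ∧
      H.Adj a b ∧ H.Adj b c ∧ H.Adj a c ∧ H.Adj d e ∧ H.Adj e f ∧ H.Adj d f) :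
    ¬ H ⊑ G := by
  classical
  rintro ⟨φ⟩
  obtain ⟨a, b, c, d, e, f, hnd, hab, hbc, hac, hde, hef, hdf⟩ := hH
  have hhit : ∀ x y z, H.Adj x y → H.Adj x z → H.Adj y z →
      φ x = v ∨ φ y = v ∨ φ z = v := by
    intro x y z hxy hxz hyz
    have hmem := hv {φ x, φ y, φ z} (is3Clique_triple_iff.2
      ⟨φ.toHom.map_adj hxy, φ.toHom.map_adj hxz, φ.toHom.map_adj hyz⟩)
    simpa only [mem_insert, mem_singleton, eq_comm] using hmem
  simp only [List.nodup_cons, List.mem_cons, List.not_mem_nil] at hnd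
  rcases hhit a b c hab hac hbc with h₁ | h₁ | h₁ <;>
    rcases hhit d e f hde hdf hef with h₂ | h₂ | h₂ <;>
    · have := φ.injective (h₁.trans h₂.symm); tauto

namespace completeMultipartiteGraph

variable {ι : Type*} [Fintype ι] (V : ι → Type*)

def transversal (f : ∀ i, V i) : Finset (Σ i, V i) :=
  univ.map ⟨fun i => ⟨i, f i⟩, fun _ _ h => congrArg Sigma.fst h⟩

theorem transversal_injective : Injective (transversal V) := by
  intro f g h
  funext i
  have hmem : (⟨i, f i⟩ : Σ i, V i) ∈ transversal V g := h ▸ mem_map_of_mem _ (mem_univ i)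
  obtain ⟨j, -, hj⟩ := mem_map.1 hmem
  obtain ⟨rfl, hfg⟩ := Sigma.mk.inj_iff.1 hj
  exact (eq_of_heq hfg).symm

theorem exists_mk_mem_of_isNClique {s : Finset (Σ i, V i)}
    (hs : (completeMultipartiteGraph V).IsNClique (Fintype.card ι) s) (i : ι) :
    ∃ y : V i, ⟨i, y⟩ ∈ s := by
  classical
  have hinj : Set.InjOn Sigma.fst (s : Set (Σ i, V i)) := fun x hx y hy hxy => by
    by_contra hne
    exact hs.isClique hx hy hne hxy
  have himage : s.image Sigma.fst = univ :=
    eq_univ_of_card _ ((card_image_of_injOn hinj).trans hs.card_eq)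
  obtain ⟨⟨j, y⟩, hy, rfl⟩ := mem_image.1 (himage ▸ mem_univ i)
  exact ⟨y, hy⟩

theorem cliqueSet_card_eq_range_transversal :
    (completeMultipartiteGraph V).cliqueSet (Fintype.card ι) = Set.range (transversal V) := by
  ext s
  rw [mem_cliqueSet_iff]
  constructor
  · intro hs
    choose f hf using exists_mk_mem_of_isNClique V hs
    refine ⟨f, eq_of_subset_of_card_le ?_ ?_⟩
    · intro x hx
      obtain ⟨i, -, rfl⟩ := mem_map.1 hx
      exact hf i
    · simp [transversal, hs.card_eq]
  · rintro ⟨f, rfl⟩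
    refine ⟨?_, by simp [transversal]⟩
    intro x hx y hy hne
    obtain ⟨i, -, rfl⟩ := mem_map.1 hx
    obtain ⟨j, -, rfl⟩ := mem_map.1 hy
    simp only [comap_adj, top_adj]
    rintro rfl
    exact hne rfl

theorem ncard_cliqueSet_card :
    ((completeMultipartiteGraph V).cliqueSet (Fintype.card ι)).ncard = ∏ i, Nat.card (V i) := by
  rw [cliqueSet_card_eq_range_transversal, Set.ncard_range_of_injective (transversal_injective V),
    Nat.card_pi]

end completeMultipartiteGraph

end SimpleGraph

namespace K1abGraph

abbrev Vert (n : ℕ) := Σ i : Fin 3, ![Fin 1, Fin ((n - 1) / 2), Fin (n - 1 - (n - 1) / 2)] i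

instance (n : ℕ) (i : Fin 3) :
    Finite (![Fin 1, Fin ((n - 1) / 2), Fin (n - 1 - (n - 1) / 2)] i) := by
  fin_cases i <;> exact Finite.of_fintype (Fin _)

def apex (n : ℕ) : Vert n := ⟨0, (0 : Fin 1)⟩

theorem apex_mem_of_mem_cliqueSet {n : ℕ} {s : Finset (Vert n)}
    (hs : s ∈ (K1abGraph n).cliqueSet 3) : apex n ∈ s := by
  have hs' : (K1abGraph n).IsNClique (Fintype.card (Fin 3)) s := by
    rwa [Fintype.card_fin, ← mem_cliqueSet_iff]
  obtain ⟨y, hy⟩ := completeMultipartiteGraph.exists_mk_mem_of_isNClique _ hs' 0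
  rwa [Subsingleton.elim (α := Fin 1) y 0] at hy

theorem nat_card_vert {n : ℕ} (hn : 1 ≤ n) : Nat.card (Vert n) = n := by
  rw [Nat.card_sigma, Fin.sum_univ_three]
  change Nat.card (Fin 1) + Nat.card (Fin ((n - 1) / 2)) +
    Nat.card (Fin (n - 1 - (n - 1) / 2)) = n
  rw [Nat.card_fin, Nat.card_fin, Nat.card_fin]
  omega

theorem ncard_cliqueSet_three (n : ℕ) : ((K1abGraph n).cliqueSet 3).ncard = (n - 1) ^ 2 / 4 := by
  have hcount := completeMultipartiteGraph.ncard_cliqueSet_card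
    ![Fin 1, Fin ((n - 1) / 2), Fin (n - 1 - (n - 1) / 2)]
  rw [Fintype.card_fin, Fin.prod_univ_three] at hcount
  rw [K1abGraph, hcount, ← Nat.div_two_mul_sub_div_two]
  change Nat.card (Fin 1) * Nat.card (Fin ((n - 1) / 2)) *
    Nat.card (Fin (n - 1 - (n - 1) / 2)) = _
  rw [Nat.card_fin, Nat.card_fin, Nat.card_fin, one_mul]

end K1abGraph

theorem stmt_16 {W : Type*} (n : ℕ) (hn : 1 ≤ n) (H : SimpleGraph W)
    (hH : ∃ a b c d e f : W, ([a, b, c, d, e, f] : List W).Nodup ∧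
      H.Adj a b ∧ H.Adj b c ∧ H.Adj a c ∧ H.Adj d e ∧ H.Adj e f ∧ H.Adj d f) :
    (¬ ∃ φ : H →g K1abGraph n, Function.Injective φ) ∧
    ((K1abGraph n).cliqueSet 3).ncard = (n - 1) ^ 2 / 4 ∧
    (∃ G : SimpleGraph (Fin n),
      (¬ ∃ φ : H →g G, Function.Injective φ) ∧
      (n - 1) ^ 2 / 4 ≤ (G.cliqueSet 3).ncard) := by
  have hfree : ¬ H ⊑ K1abGraph n := not_isContained_of_forall_mem_cliqueSet_three _
    (fun _ => K1abGraph.apex_mem_of_mem_cliqueSet) hH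
  obtain ⟨e⟩ : Nonempty (K1abGraph.Vert n ≃ Fin n) :=
    Finite.card_eq.1 ((K1abGraph.nat_card_vert hn).trans (Nat.card_fin n).symm)
  simp only [← isContained_iff_exists_injective_hom]
  refine ⟨hfree, K1abGraph.ncard_cliqueSet_three n, (K1abGraph n).map e, ?_, ?_⟩
  · rwa [← isContained_congr_right (Iso.map e _)]
  · rw [ncard_cliqueSet_map_equiv, K1abGraph.ncard_cliqueSet_three]
end
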